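/- arXiv:2210.06383 — 4 statements merged into one kernel-verified Lean document; each statement's English description precedes it below -/
import Mathlib

section
/- Let f: ℝ → ℝ be continuous and define F(s) = s·f(s) - ∫₀ˢ f(σ) dσ. Let t₀ < t₁ and let g ∈ C([t₀,t₁], ℝ) be such that f ∘ g is continuously differentiable on [t₀,t₁]. Then F(g(t₁)) - F(g(t₀)) = ∫_{t₀}^{t₁} g(t) · (d/dt)(f(g(t))) dt. -/
open intervalIntegral Set Topology Filter NNReal

/-!
With `u = f ∘ g`, the increment of `F` splits as
`F (g t') - F (g t) = g t' * (u t' - u t) - ∫ σ in g t..g t', (f σ - u t)`.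
By the intermediate value theorem every `σ` between `g t` and `g t'` is a value `g τ` with `τ`
between `t` and `t'`, so the Lipschitz bound on `u` (coming from the bounded derivative `h`)
makes the integral `O(|t' - t| * |g t' - g t|) = o(|t' - t|)`. Hence `F ∘ g` has derivative
`g * h`, and the identity is the fundamental theorem of calculus. This direct argument needs no
smoothness of `f` or `g`, so no mollification.
-/

lemma sub_eq_mul_sub_sub_integral {f : ℝ → ℝ} (hf : Continuous f) (a b : ℝ) :
    (b * f b - ∫ σ in (0 : ℝ)..b, f σ) - (a * f a - ∫ σ in (0 : ℝ)..a, f σ)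
      = b * (f b - f a) - ∫ σ in a..b, (f σ - f a) := by
  rw [integral_sub (hf.intervalIntegrable a b) intervalIntegrable_const,
    intervalIntegral.integral_const,
    ← integral_interval_sub_left (hf.intervalIntegrable 0 b) (hf.intervalIntegrable 0 a),
    smul_eq_mul]
  ring

lemma abs_integral_sub_le_of_comp {f g : ℝ → ℝ} {a b c K : ℝ} (hg : ContinuousOn g (uIcc a b))
    (hK : ∀ τ ∈ uIcc a b, |f (g τ) - c| ≤ K) :
    |∫ σ in g a..g b, (f σ - c)| ≤ K * |g b - g a| := by
  have hbound : ∀ σ ∈ uIoc (g a) (g b), ‖f σ - c‖ ≤ K := fun σ hσ => by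
    obtain ⟨τ, hτ, rfl⟩ := intermediate_value_uIcc hg (uIoc_subset_uIcc hσ)
    exact hK τ hτ
  simpa only [Real.norm_eq_abs] using norm_integral_le_of_norm_le_const hbound

theorem hasDerivWithinAt_mul_sub_integral_comp {f g : ℝ → ℝ} (hf : Continuous f) {s : Set ℝ}
    (hs : s.OrdConnected) (hg : ContinuousOn g s) {K : ℝ≥0} (hu : LipschitzOnWith K (f ∘ g) s)
    {t v : ℝ} (ht : t ∈ s) (hderiv : HasDerivWithinAt (f ∘ g) v s t) :
    HasDerivWithinAt (fun τ => g τ * f (g τ) - ∫ σ in (0 : ℝ)..g τ, f σ) (g t * v) s t := by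
  set R : ℝ → ℝ := fun t' => ∫ σ in g t..g t', (f σ - f (g t))
  have hslope : ∀ t', slope (fun τ => g τ * f (g τ) - ∫ σ in (0 : ℝ)..g τ, f σ) t t'
      = g t' * slope (f ∘ g) t t' - R t' / (t' - t) := fun t' => by
    simp only [slope_def_field, sub_eq_mul_sub_sub_integral hf, Function.comp_apply, R]
    ring
  have hR : ∀ t' ∈ s, |R t'| ≤ K * |t' - t| * |g t' - g t| := fun t' ht' =>
    abs_integral_sub_le_of_comp (hg.mono (hs.uIcc_subset ht ht')) fun τ hτ => by
      have hlip := hu.dist_le_mul τ (hs.uIcc_subset ht ht' hτ) t ht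
      rw [Real.dist_eq, Real.dist_eq] at hlip
      exact hlip.trans (mul_le_mul_of_nonneg_left (abs_sub_left_of_mem_uIcc hτ) K.2)
  have hg_t : Tendsto g (𝓝[s \ {t}] t) (𝓝 (g t)) := ((hg t ht).mono sdiff_subset).tendsto
  have hR_div : Tendsto (fun t' => R t' / (t' - t)) (𝓝[s \ {t}] t) (𝓝 0) := by
    have hbound : Tendsto (fun t' => K * |g t' - g t|) (𝓝[s \ {t}] t) (𝓝 0) := by
      simpa using ((hg_t.sub_const (g t)).abs.const_mul (K : ℝ))
    refine squeeze_zero_norm' ?_ hbound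
    filter_upwards [self_mem_nhdsWithin] with t' ht'
    have hne : 0 < |t' - t| := abs_pos.2 (sub_ne_zero.2 ht'.2)
    rw [Real.norm_eq_abs, abs_div, div_le_iff₀ hne]
    linarith [hR t' ht'.1]
  rw [hasDerivWithinAt_iff_tendsto_slope] at hderiv ⊢
  have hlim := (hg_t.mul hderiv).sub hR_div
  rw [sub_zero] at hlim
  exact hlim.congr fun t' => (hslope t').symm

theorem stmt1 (f : ℝ → ℝ) (hf_cont : Continuous f)
    (F : ℝ → ℝ) (hF : ∀ s, F s = s * f s - ∫ σ in (0:ℝ)..s, f σ)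
    (t₀ t₁ : ℝ) (ht : t₀ < t₁)
    (g : ℝ → ℝ) (hg_cont : ContinuousOn g (Icc t₀ t₁))
    (h : ℝ → ℝ) (hh_cont : ContinuousOn h (Icc t₀ t₁))
    (hderiv : ∀ t ∈ Icc t₀ t₁, HasDerivWithinAt (f ∘ g) (h t) (Icc t₀ t₁) t) :
    F (g t₁) - F (g t₀) = ∫ t in t₀..t₁, g t * h t := by
  obtain ⟨C, hC⟩ := isCompact_Icc.exists_bound_of_continuousOn hh_cont
  have hlip : LipschitzOnWith C.toNNReal (f ∘ g) (Icc t₀ t₁) :=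
    (convex_Icc t₀ t₁).lipschitzOnWith_of_nnnorm_hasDerivWithin_le hderiv fun t ht => by
      rw [← NNReal.coe_le_coe, coe_nnnorm]
      exact (hC t ht).trans (le_max_left _ _)
  have hFg : ∀ t ∈ Icc t₀ t₁, HasDerivWithinAt (fun τ => F (g τ)) (g t * h t) (Icc t₀ t₁) t := by
    intro t ht
    simp only [hF]
    exact hasDerivWithinAt_mul_sub_integral_comp hf_cont ordConnected_Icc hg_cont hlip ht
      (hderiv t ht)
  symm
  exact integral_eq_sub_of_hasDeriv_right_of_le ht.le (fun t ht => (hFg t ht).continuousWithinAt)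
    (fun t ht => (hFg t (Ioo_subset_Icc_self ht)).mono_of_mem_nhdsWithin
      (Icc_mem_nhdsGT_of_mem ⟨ht.1.le, ht.2⟩))
    ((hg_cont.mul hh_cont).intervalIntegrable_of_Icc ht.le)
end

section
/- Let f: ℝ → ℝ be an increasing homeomorphism and let φₙ be nonnegative smooth mollifiers with support in [-1/n, 1/n] and integral 1. Set fₙ = φₙ * f (convolution). Then fₙ is strictly increasing, bijective, and the inverses satisfy ‖(fₙ)⁻¹ - f⁻¹‖_∞ ≤ 1/n, i.e. |fₙ⁻¹(y) - f⁻¹(y)| ≤ 1/n for all y ∈ ℝ. -/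
open MeasureTheory Set Function Filter

theorem stmt2 (f : ℝ → ℝ) (hf_mono : StrictMono f) (hf_cont : Continuous f)
    (hf_surj : Function.Surjective f)
    (n : ℕ) (hn : 0 < n)
    (φ : ℝ → ℝ) (hφ_smooth : ContDiff ℝ (⊤ : ℕ∞) φ) (hφ_nonneg : ∀ x, 0 ≤ φ x)
    (hφ_supp : Function.support φ ⊆ Icc (-(1 / (n:ℝ))) (1 / (n:ℝ)))
    (hφ_int : ∫ x, φ x = 1)
    (fn : ℝ → ℝ) (hfn : ∀ x, fn x = ∫ y, f y * φ (x - y)) :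
    StrictMono fn ∧ Function.Bijective fn ∧
    ∀ y : ℝ, |Function.invFun fn y - Function.invFun f y| ≤ 1 / (n:ℝ) := by
  have hφc : HasCompactSupport φ :=
    HasCompactSupport.of_support_subset_isCompact isCompact_Icc hφ_supp
  have hφ_cont : Continuous φ := hφ_smooth.continuous
  have hfl : LocallyIntegrable f := hf_cont.locallyIntegrable
  have hφ_integrable : Integrable φ := hφ_cont.integrable_of_hasCompactSupport hφc
  have hint : ∀ x : ℝ, Integrable (fun t => f (x - t) * φ t) := fun x =>
    ((hf_cont.comp (continuous_const.sub continuous_id)).mul hφ_cont).integrable_of_hasCompactSupport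
      (hφc.mul_left)
  -- rewrite fn as integral against φ t
  have key : ∀ x : ℝ, fn x = ∫ t, f (x - t) * φ t := by
    intro x
    have h := integral_sub_left_eq_self (fun t => f (x - t) * φ t) volume x
    simp only [sub_sub_cancel] at h
    rw [hfn x, ← h]
  -- bounds
  have upper : ∀ x : ℝ, fn x ≤ f (x + 1 / n) := by
    intro x
    rw [key x]
    have hle : ∀ t, f (x - t) * φ t ≤ f (x + 1 / n) * φ t := by
      intro t
      by_cases ht : φ t = 0
      · simp [ht]
      · have hmem := hφ_supp (Function.mem_support.2 ht)
        exact mul_le_mul_of_nonneg_right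
          (hf_mono.monotone (by linarith [hmem.1])) (hφ_nonneg t)
    calc ∫ t, f (x - t) * φ t ≤ ∫ t, f (x + 1 / n) * φ t :=
          integral_mono (hint x) (hφ_integrable.const_mul _) hle
      _ = f (x + 1 / n) := by rw [integral_const_mul, hφ_int, mul_one]
  have lower : ∀ x : ℝ, f (x - 1 / n) ≤ fn x := by
    intro x
    rw [key x]
    have hle : ∀ t, f (x - 1 / n) * φ t ≤ f (x - t) * φ t := by
      intro t
      by_cases ht : φ t = 0
      · simp [ht]
      · have hmem := hφ_supp (Function.mem_support.2 ht)
        exact mul_le_mul_of_nonneg_right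
          (hf_mono.monotone (by linarith [hmem.2])) (hφ_nonneg t)
    calc f (x - 1 / n) = ∫ t, f (x - 1 / n) * φ t := by
          rw [integral_const_mul, hφ_int, mul_one]
      _ ≤ ∫ t, f (x - t) * φ t :=
          integral_mono (hφ_integrable.const_mul _) (hint x) hle
  -- support of φ has positive measure
  have hsupp_pos : 0 < volume (Function.support φ) := by
    by_contra h
    push_neg at h
    have h0 : volume (Function.support φ) = 0 := le_antisymm h zero_le
    have hae : φ =ᵐ[volume] 0 := by
      rw [Filter.EventuallyEq, ae_iff]
      simpa [Function.support] using h0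
    have : (∫ x, φ x) = 0 := by
      rw [integral_congr_ae hae]; simp
    rw [hφ_int] at this; norm_num at this
  -- strict mono
  have hmono : StrictMono fn := by
    intro x1 x2 hx
    have hpos : 0 < ∫ t, (f (x2 - t) - f (x1 - t)) * φ t := by
      rw [integral_pos_iff_support_of_nonneg]
      · refine lt_of_lt_of_le hsupp_pos (measure_mono ?_)
        intro t ht
        have ht' : φ t ≠ 0 := ht
        have hlt : f (x1 - t) < f (x2 - t) := hf_mono (by linarith)
        simp only [Function.mem_support]
        exact mul_ne_zero (by linarith) ht'
      · intro t
        exact mul_nonneg (sub_nonneg.2 (hf_mono.monotone (by linarith))) (hφ_nonneg t)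
      · simpa [sub_mul] using ((hint x2).sub (hint x1) :
          Integrable (fun t => f (x2 - t) * φ t - f (x1 - t) * φ t))
    have h2 : (0:ℝ) < ∫ t, (f (x2 - t) * φ t - f (x1 - t) * φ t) := by
      simpa [sub_mul] using hpos
    rw [integral_sub (hint x2) (hint x1)] at h2
    rw [key x1, key x2]
    linarith
  -- continuity via convolution
  have hcont : Continuous fn := by
    have h := HasCompactSupport.continuous_convolution_right
      (ContinuousLinearMap.mul ℝ ℝ) hφc hfl hφ_cont
    exact h.congr fun x => by
      rw [convolution_def]
      simp only [ContinuousLinearMap.mul_apply']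
      exact (hfn x).symm
  -- tendsto
  have htop : Tendsto f atTop atTop :=
    hf_mono.monotone.tendsto_atTop_atTop fun b => (hf_surj b).imp fun a ha => ha.ge
  have hbot : Tendsto f atBot atBot :=
    hf_mono.monotone.tendsto_atBot_atBot fun b => (hf_surj b).imp fun a ha => ha.le
  have hfn_top : Tendsto fn atTop atTop := by
    refine tendsto_atTop_mono (fun x => lower x) (htop.comp ?_)
    simpa [sub_eq_add_neg] using tendsto_atTop_add_const_right atTop (-(1/(n:ℝ))) tendsto_id
  have hfn_bot : Tendsto fn atBot atBot := by
    refine tendsto_atBot_mono (fun x => upper x) (hbot.comp ?_)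
    simpa using tendsto_atBot_add_const_right atBot (1/(n:ℝ)) tendsto_id
  have hsurj : Function.Surjective fn := hcont.surjective hfn_top hfn_bot
  refine ⟨hmono, ⟨hmono.injective, hsurj⟩, ?_⟩
  intro y
  set a := Function.invFun fn y with ha_def
  set b := Function.invFun f y with hb_def
  have ha : fn a = y := Function.invFun_eq (hsurj y)
  have hb : f b = y := Function.invFun_eq (hf_surj y)
  have h1 : a - 1 / n ≤ b := by
    have : f (a - 1 / n) ≤ f b := by rw [hb]; rw [← ha]; exact lower a
    exact hf_mono.le_iff_le.mp this
  have h2 : b ≤ a + 1 / n := by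
    have : f b ≤ f (a + 1 / n) := by rw [hb, ← ha]; exact upper a
    exact hf_mono.le_iff_le.mp this
  rw [abs_le]
  constructor <;> linarith
end

section
/- The function u(x,t) defined by u(x,t) = (2/3 · (t - x))^{3/2} for x < t and u(x,t) = 0 for x ≥ t is a C¹ function on [0,∞) × [0,∞) that satisfies the transport equation u_x + u_t = 0 on the region where t ≠ x, has u(x,0) = 0 and u_t(x,0) = 0 for all x > 0, and satisfies the boundary condition u_x(0,t) = -(u_t(0,t)³)_t for all t > 0. -/
/-!
The function is the right-travelling wave `u (x, t) = φ (t - x)` with profile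
`φ y = (2y/3) ^ (3/2)`, so it is `C¹` and solves the transport equation everywhere. Since
`φ' y = (2y/3) ^ (1/2)`, we have `φ' ^ 3 = φ`, hence `(u_t (0, ·) ^ 3)_t = φ'` while
`u_x (0, ·) = -φ'`. For `y ≤ 0` the profile vanishes, which gives the zero initial data.
-/

open Set Real

/-- For `x < 0`, Mathlib's `x ^ y = exp (log x * y) * cos (y * π)` vanishes at half-odd `y`. -/
lemma Real.rpow_odd_div_two_of_neg {x : ℝ} (hx : x < 0) (k : ℕ) :
    x ^ ((2 * k + 1 : ℝ) / 2) = 0 := by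
  rw [rpow_def_of_neg hx, mul_eq_zero]
  exact Or.inr (cos_eq_zero_iff.mpr ⟨k, by push_cast; ring⟩)

lemma Real.rpow_odd_div_two_of_nonpos {x : ℝ} (hx : x ≤ 0) (k : ℕ) :
    x ^ ((2 * k + 1 : ℝ) / 2) = 0 := by
  rcases hx.lt_or_eq with hx | rfl
  · exact rpow_odd_div_two_of_neg hx k
  · exact zero_rpow (by positivity)

namespace WaveProfile

noncomputable def profile (y : ℝ) : ℝ := (2 / 3 * y) ^ ((3 : ℝ) / 2)

noncomputable def profileDeriv (y : ℝ) : ℝ := (2 / 3 * y) ^ ((1 : ℝ) / 2)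

lemma profile_of_nonpos {y : ℝ} (hy : y ≤ 0) : profile y = 0 := by
  rw [profile]
  convert rpow_odd_div_two_of_nonpos (x := 2 / 3 * y) (by linarith) 1 using 2
  norm_num

lemma profileDeriv_of_nonpos {y : ℝ} (hy : y ≤ 0) : profileDeriv y = 0 := by
  rw [profileDeriv]
  convert rpow_odd_div_two_of_nonpos (x := 2 / 3 * y) (by linarith) 0 using 2
  norm_num

lemma hasDerivAt_profile (y : ℝ) : HasDerivAt profile (profileDeriv y) y := by
  unfold profile profileDeriv
  convert ((hasDerivAt_id' y).const_mul (2 / 3 : ℝ)).rpow_const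
    (p := (3 : ℝ) / 2) (Or.inr (by norm_num)) using 1
  rw [show (3 : ℝ) / 2 - 1 = 1 / 2 by norm_num]
  ring

lemma deriv_profile : deriv profile = profileDeriv :=
  funext fun y => (hasDerivAt_profile y).deriv

lemma contDiff_profile : ContDiff ℝ 1 profile := by
  refine contDiff_one_iff_deriv.mpr ⟨fun y => (hasDerivAt_profile y).differentiableAt, ?_⟩
  rw [deriv_profile]
  exact (continuous_rpow_const (by norm_num)).comp (continuous_const.mul continuous_id)

lemma profileDeriv_pow_three (y : ℝ) : profileDeriv y ^ 3 = profile y := by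
  rcases le_or_gt y 0 with hy | hy
  · rw [profileDeriv_of_nonpos hy, profile_of_nonpos hy]
    norm_num
  · rw [profileDeriv, profile, ← rpow_natCast, ← rpow_mul (by positivity)]
    norm_num

end WaveProfile

open WaveProfile in
theorem stmt3 (u : ℝ × ℝ → ℝ)
    (hu : ∀ x t : ℝ, u (x, t) =
      if x < t then ((2 / 3) * (t - x)) ^ ((3 : ℝ) / 2) else 0) :
    ContDiffOn ℝ 1 u (Ici 0 ×ˢ Ici 0) ∧
    (∀ x t : ℝ, 0 ≤ x → 0 ≤ t → t ≠ x →
      deriv (fun s => u (s, t)) x + deriv (fun s => u (x, s)) t = 0) ∧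
    (∀ x : ℝ, 0 < x → u (x, 0) = 0 ∧ deriv (fun s => u (x, s)) 0 = 0) ∧
    (∀ t : ℝ, 0 < t →
      deriv (fun s => u (s, t)) 0 =
        - deriv (fun s => (deriv (fun τ => u (0, τ)) s) ^ 3) t) := by
  have hu_wave : u = fun p => profile (p.2 - p.1) := by
    funext ⟨x, t⟩
    rw [hu]
    split_ifs with h
    · rfl
    · exact (profile_of_nonpos (by linarith)).symm
  subst hu_wave
  simp only [deriv_comp_const_sub, deriv_comp_sub_const, deriv_profile, sub_zero]
  refine ⟨(contDiff_profile.comp (contDiff_snd.sub contDiff_fst)).contDiffOn,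
    fun x t _ _ _ => neg_add_cancel _, fun x hx => ?_, fun t _ => ?_⟩
  · exact ⟨profile_of_nonpos (by linarith), profileDeriv_of_nonpos (by linarith)⟩
  · simp only [profileDeriv_pow_three, deriv_profile]
end

section
/- Let β > 0 and let δ: [t_*, ∞) → [0,∞) be continuous with δ not identically zero near t_*. Suppose a continuous function D satisfies D(t_*) = 0 and |D(t)| ≤ ∫_{t_*}^{t} (-δ(s) + β∫_{t_*}^{s} δ(τ) dτ) ds for all t ≥ t_*. Then, by Fubini, the right-hand side equals ∫_{t_*}^{t}(-1 + β(t - τ))δ(τ) dτ, which is negative for t ∈ (t_*, t_* + 1/β) whenever ∫_{t_*}^{t} δ > 0; hence δ ≡ 0 on [t_*, t_* + 1/β]. -/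
open Set intervalIntegral Filter
open MeasureTheory (volume)
open scoped Interval

/-!
Integrating by parts, `∫ₐᵗ (-δ(s) + β ∫ₐˢ δ) ds = ∫ₐᵗ (-1 + β (t - τ)) δ(τ) dτ`.
For `t < a + 1/β` the kernel `-1 + β (t - τ)` is negative on `[a, t]`, so the right-hand side is
negative as soon as `∫ₐᵗ δ > 0`; it also dominates `|D t| ≥ 0`. Hence the primitive of `δ`
vanishes on `(a, a + 1/β)`, and so does its derivative `δ`, also at the endpoints by continuity.
-/

section

variable {E : Type*} [NormedAddCommGroup E] [NormedSpace ℝ E] [CompleteSpace E]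

theorem hasDerivAt_integral_of_mem_Ioo {f : ℝ → E} {a b x : ℝ} (hf : ContinuousOn f [[a, b]])
    (hx : x ∈ Ioo (min a b) (max a b)) :
    HasDerivAt (fun u => ∫ t in a..u, f t) (f x) x := by
  have hIoo : ContinuousOn f (Ioo (min a b) (max a b)) := hf.mono Ioo_subset_Icc_self
  exact integral_hasDerivAt_right
    ((hf.mono (uIcc_subset_uIcc_left (Ioo_subset_Icc_self hx))).intervalIntegrable)
    (hIoo.stronglyMeasurableAtFilter isOpen_Ioo x hx)
    (hIoo.continuousAt (isOpen_Ioo.mem_nhds hx))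

theorem eqOn_zero_of_integral_eq_zero {f : ℝ → E} {a b : ℝ} (hab : a < b)
    (hf : ContinuousOn f (Icc a b)) (h : ∀ t ∈ Ioo a b, ∫ x in a..t, f x = 0) :
    EqOn f 0 (Icc a b) := by
  have hIoo : EqOn f 0 (Ioo a b) := fun x hx => by
    have hderiv := hasDerivAt_integral_of_mem_Ioo (f := f) (b := b)
      (by rwa [uIcc_of_le hab.le]) (by rwa [min_eq_left hab.le, max_eq_right hab.le])
    exact hderiv.unique ((hasDerivAt_const x 0).congr_of_eventuallyEq
      (eventuallyEq_of_mem (isOpen_Ioo.mem_nhds hx) h))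
  exact hIoo.of_subset_closure hf continuousOn_const Ioo_subset_Icc_self
    (closure_Ioo hab.ne).ge

end

/-- The case `n = 2` of Cauchy's formula for repeated integration. -/
theorem integral_integral_eq_integral_sub_mul {f : ℝ → ℝ} {a b : ℝ}
    (hf : ContinuousOn f [[a, b]]) :
    ∫ s in a..b, ∫ t in a..s, f t = ∫ t in a..b, (b - t) * f t := by
  have h := integral_mul_deriv_eq_deriv_mul_of_hasDerivAt (v := fun s => s - b) (v' := fun _ => 1)
    (continuousOn_primitive_interval hf.integrableOn_uIcc) (by fun_prop)
    (fun x hx => hasDerivAt_integral_of_mem_Ioo hf hx)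
    (fun x _ => (hasDerivAt_id x).sub_const b) hf.intervalIntegrable intervalIntegrable_const
  simp only [mul_one, sub_self, mul_zero, integral_same, zero_mul, zero_sub] at h
  rw [h, ← integral_neg]
  congr 1 with t
  ring

theorem integral_neg_add_mul_integral_eq {f : ℝ → ℝ} {a b : ℝ} (β : ℝ)
    (hf : ContinuousOn f [[a, b]]) :
    ∫ s in a..b, (-f s + β * ∫ t in a..s, f t) = ∫ t in a..b, (-1 + β * (b - t)) * f t := by
  have hF : IntervalIntegrable (fun s => ∫ t in a..s, f t) volume a b :=
    (continuousOn_primitive_interval hf.integrableOn_uIcc).intervalIntegrable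
  have hg : IntervalIntegrable (fun t => (b - t) * f t) volume a b :=
    hf.intervalIntegrable.continuousOn_mul (by fun_prop)
  simp_rw [add_mul, neg_one_mul, mul_assoc]
  rw [integral_add (f := fun s => -f s) hf.intervalIntegrable.neg (hF.const_mul β),
    integral_add (f := fun t => -f t) hf.intervalIntegrable.neg (hg.const_mul β),
    integral_const_mul, integral_const_mul, integral_integral_eq_integral_sub_mul hf]

theorem integral_neg_one_add_mul_sub_mul_neg {f : ℝ → ℝ} {a t β : ℝ} (hβ : 0 ≤ β)
    (hat : a ≤ t) (hβt : β * (t - a) < 1) (hf : ∀ x ∈ Icc a t, 0 ≤ f x)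
    (hpos : 0 < ∫ x in a..t, f x) :
    ∫ x in a..t, (-1 + β * (t - x)) * f x < 0 := by
  have hfi := intervalIntegrable_of_integral_ne_zero hpos.ne'
  calc ∫ x in a..t, (-1 + β * (t - x)) * f x
      ≤ ∫ x in a..t, (-1 + β * (t - a)) * f x := by
        refine integral_mono_on hat (hfi.continuousOn_mul (by fun_prop)) (hfi.const_mul _)
          fun x hx => mul_le_mul_of_nonneg_right ?_ (hf x hx)
        nlinarith [hx.1]
    _ = (-1 + β * (t - a)) * ∫ x in a..t, f x := integral_const_mul _ _
    _ < 0 := mul_neg_of_neg_of_pos (by linarith) hpos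

theorem stmt10_general (β tstar : ℝ) (hβ : 0 < β)
    (δ : ℝ → ℝ) (hδ_cont : ContinuousOn δ (Ici tstar))
    (hδ_nonneg : ∀ t ∈ Ici tstar, 0 ≤ δ t)
    (D : ℝ → ℝ)
    (hD_bound : ∀ t ∈ Ici tstar,
      |D t| ≤ ∫ s in tstar..t, (-δ s + β * ∫ τ in tstar..s, δ τ)) :
    (∀ t ∈ Ici tstar,
      (∫ s in tstar..t, (-δ s + β * ∫ τ in tstar..s, δ τ))
        = ∫ τ in tstar..t, (-1 + β * (t - τ)) * δ τ) ∧
    (∀ t ∈ Ioo tstar (tstar + 1 / β), (0 < ∫ τ in tstar..t, δ τ) →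
      (∫ τ in tstar..t, (-1 + β * (t - τ)) * δ τ) < 0) ∧
    (∀ t ∈ Icc tstar (tstar + 1 / β), δ t = 0) := by
  have hδ_Icc (t : ℝ) : ContinuousOn δ (Icc tstar t) := hδ_cont.mono Icc_subset_Ici_self
  have fubini : ∀ t ∈ Ici tstar, (∫ s in tstar..t, (-δ s + β * ∫ τ in tstar..s, δ τ))
      = ∫ τ in tstar..t, (-1 + β * (t - τ)) * δ τ := fun t ht =>
    integral_neg_add_mul_integral_eq β (by rw [uIcc_of_le ht]; exact hδ_Icc t)
  have kernel_neg : ∀ t ∈ Ioo tstar (tstar + 1 / β), (0 < ∫ τ in tstar..t, δ τ) →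
      (∫ τ in tstar..t, (-1 + β * (t - τ)) * δ τ) < 0 := fun t ht hpos => by
    refine integral_neg_one_add_mul_sub_mul_neg hβ.le ht.1.le ?_
      (fun x hx => hδ_nonneg x hx.1) hpos
    have := (lt_div_iff₀' hβ).1 (sub_lt_iff_lt_add'.2 ht.2)
    linarith
  refine ⟨fubini, kernel_neg, ?_⟩
  have primitive_eq_zero : ∀ t ∈ Ioo tstar (tstar + 1 / β), ∫ τ in tstar..t, δ τ = 0 := by
    intro t ht
    refine le_antisymm (not_lt.1 fun hpos => ?_)
      (integral_nonneg ht.1.le fun x hx => hδ_nonneg x hx.1)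
    have hD := hD_bound t ht.1.le
    rw [fubini t ht.1.le] at hD
    linarith [abs_nonneg (D t), kernel_neg t ht hpos]
  exact eqOn_zero_of_integral_eq_zero (by simpa using hβ) (hδ_Icc _) primitive_eq_zero

theorem stmt10 (β tstar : ℝ) (hβ : 0 < β)
    (δ : ℝ → ℝ) (hδ_cont : ContinuousOn δ (Ici tstar))
    (hδ_nonneg : ∀ t ∈ Ici tstar, 0 ≤ δ t)
    (D : ℝ → ℝ) (hD_cont : ContinuousOn D (Ici tstar)) (hD0 : D tstar = 0)
    (hD_bound : ∀ t ∈ Ici tstar,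
      |D t| ≤ ∫ s in tstar..t, (-δ s + β * ∫ τ in tstar..s, δ τ)) :
    (∀ t ∈ Ici tstar,
      (∫ s in tstar..t, (-δ s + β * ∫ τ in tstar..s, δ τ))
        = ∫ τ in tstar..t, (-1 + β * (t - τ)) * δ τ) ∧
    (∀ t ∈ Ioo tstar (tstar + 1 / β), (0 < ∫ τ in tstar..t, δ τ) →
      (∫ τ in tstar..t, (-1 + β * (t - τ)) * δ τ) < 0) ∧
    (∀ t ∈ Icc tstar (tstar + 1 / β), δ t = 0) :=
  stmt10_general β tstar hβ δ hδ_cont hδ_nonneg D hD_bound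
end
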